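/- arXiv:1807.02983 — 5 statements merged into one kernel-verified Lean document; each statement's English description precedes it below -/
import Mathlib

section
/- There is no panmagic square of order 6. That is, there exists no function S : Fin 6 → Fin 6 → ℕ such that (i, j) ↦ S i j is a bijection onto {1, 2, …, 36}, every row sum and every column sum equals 111, and for every k ∈ Fin 6 both broken-diagonal sums ∑_{i ∈ Fin 6} S i (i + k) and ∑_{i ∈ Fin 6} S i (k − i) (index arithmetic in Fin 6, i.e. modulo 6) equal 111. -/
/-- A semi-magic square of order 6: a function `S : Fin 6 → Fin 6 → ℕ` such that
`(i, j) ↦ S i j` is a bijection onto `{1, …, 36}` and every row and column sums to 111. -/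
def IsSemiMagicSquare6 (S : Fin 6 → Fin 6 → ℕ) : Prop :=
  Function.Injective (fun p : Fin 6 × Fin 6 => S p.1 p.2) ∧
  (Set.range fun p : Fin 6 × Fin 6 => S p.1 p.2) = Set.Icc 1 36 ∧
  (∀ i, ∑ j, S i j = 111) ∧
  (∀ j, ∑ i, S i j = 111)

/-- There is no panmagic square of order 6. -/
theorem no_panmagic_square_order6 :
    ¬ ∃ S : Fin 6 → Fin 6 → ℕ, IsSemiMagicSquare6 S ∧
      (∀ k : Fin 6, ∑ i, S i (i + k) = 111) ∧
      (∀ k : Fin 6, ∑ i, S i (k - i) = 111) := by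
  rintro ⟨S, ⟨-, -, hr, hc⟩, hd, -⟩
  have hr0 := hr 0
  have hr2 := hr 2
  have hr4 := hr 4
  have hc0 := hc 0
  have hc2 := hc 2
  have hc4 := hc 4
  have hd1 := hd 1
  have hd3 := hd 3
  have hd5 := hd 5
  simp only [Fin.sum_univ_six, Fin.isValue, Fin.reduceAdd] at hr0 hr2 hr4 hc0 hc2 hc4 hd1 hd3 hd5

  omega
end

section
/- Let S : Fin 6 → Fin 6 → ℕ be such that (i, j) ↦ S i j is a bijection onto {1, 2, …, 36}. Then there are no indices i, j ∈ Fin 6 such that the image of the set of entries of row i under the complementing map x ↦ 37 − x equals the set of entries of column j, i.e. {37 − S i k : k ∈ Fin 6} ≠ {S k j : k ∈ Fin 6}. (This is the key fact showing that the transpose operation is never used when applying the complement-and-normalize map to a self-complement square.) -/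
/-- If the entries of `S` form a bijection onto `{1, …, 36}`, then the image of the set
of entries of any row under the complementing map `x ↦ 37 - x` never equals the set of
entries of any column. -/
theorem complement_of_row_ne_column (S : Fin 6 → Fin 6 → ℕ)
    (hinj : Function.Injective fun p : Fin 6 × Fin 6 => S p.1 p.2)
    (hrange : (Set.range fun p : Fin 6 × Fin 6 => S p.1 p.2) = Set.Icc 1 36) :
    ¬ ∃ i j : Fin 6,
      (fun x => 37 - x) '' Set.range (S i) = Set.range (fun k => S k j) := by
  rintro ⟨i, j, h⟩
  have hmem : ∀ a b : Fin 6, S a b ∈ Set.Icc 1 36 := by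
    intro a b
    have : S a b ∈ Set.range fun p : Fin 6 × Fin 6 => S p.1 p.2 := ⟨(a, b), rfl⟩
    rwa [hrange] at this
  -- S i j is in the column, hence in the complement image of the row
  have h1 : S i j ∈ Set.range (fun k => S k j) := ⟨i, rfl⟩
  rw [← h] at h1
  obtain ⟨x, ⟨k, hk⟩, hx⟩ := h1
  -- 37 - S i j is in the column
  have h2 : (37 - S i j) ∈ (fun x => 37 - x) '' Set.range (S i) := ⟨S i j, ⟨j, rfl⟩, rfl⟩
  rw [h] at h2
  obtain ⟨m, hm⟩ := h2
  have b1 := hmem i j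
  have b2 := hmem i k
  simp only [Set.mem_Icc] at b1 b2
  have hik : S i k = 37 - S i j := by
    subst hk
    simp only at hx
    omega
  have heq : (i, k) = (m, j) := by
    apply hinj
    show S i k = S m j
    simp only [] at hm
    rw [hik, hm]
  rw [Prod.mk.injEq] at heq
  obtain ⟨rfl, rfl⟩ := heq
  omega
end

section
/- Let S : Fin 6 → Fin 6 → ℕ be such that (i, j) ↦ S i j is a bijection onto {1, 2, …, 36}. Then there are no indices i, j ∈ Fin 6 such that both the set of entries of row i is closed under the complementing map x ↦ 37 − x and the set of entries of column j is closed under x ↦ 37 − x. (In the paper's terminology: a self-complement square cannot have a row and a column that are both self-complement.) -/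
/-- If the entries of `S` form a bijection onto `{1, …, 36}`, then there is no pair of a
row and a column whose sets of entries are both closed under the complementing map
`x ↦ 37 - x`. -/
theorem no_selfComplement_row_and_column (S : Fin 6 → Fin 6 → ℕ)
    (hinj : Function.Injective fun p : Fin 6 × Fin 6 => S p.1 p.2)
    (hrange : (Set.range fun p : Fin 6 × Fin 6 => S p.1 p.2) = Set.Icc 1 36) :
    ¬ ∃ i j : Fin 6,
      (∀ x ∈ Set.range (S i), 37 - x ∈ Set.range (S i)) ∧
      (∀ x ∈ Set.range (fun k => S k j), 37 - x ∈ Set.range (fun k => S k j)) := by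
  rintro ⟨i, j, hr, hc⟩
  have hmem : S i j ∈ Set.Icc 1 36 := by
    rw [← hrange]; exact ⟨(i, j), rfl⟩
  obtain ⟨h1, h36⟩ := hmem
  obtain ⟨k, hk⟩ := hr (S i j) ⟨j, rfl⟩
  obtain ⟨k', hk'⟩ := hc (S i j) ⟨i, rfl⟩
  have heq : ((i, k) : Fin 6 × Fin 6) = (k', j) := hinj (hk.trans hk'.symm)
  have hkj : k = j := by
    have := congrArg Prod.snd heq
    simpa using this
  rw [hkj] at hk
  omega
end

section
/- There is no semi-magic square S of order 6 together with fixed-point-free involutions σ and τ of Fin 6 such that S (σ i) (τ j) = 37 − S i j for all i, j ∈ Fin 6. (This is Case 2 in the proof of the paper's Theorem: a self-complement square whose rows and columns all split into complementing pairs could be rearranged into a panmagic square of order 6, which does not exist.) -/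
lemma image_lt (σ : Equiv.Perm (Fin 6)) (hinv : ∀ i, σ (σ i) = i) :
    (Finset.univ.filter (fun i => i < σ i)).image σ
      = Finset.univ.filter (fun i => σ i < i) := by
  ext x
  simp only [Finset.mem_image, Finset.mem_filter, Finset.mem_univ, true_and]
  constructor
  · rintro ⟨i, hi, rfl⟩; rw [hinv]; exact hi
  · intro hx; exact ⟨σ x, by rw [hinv]; exact hx, hinv x⟩

lemma filter_not_lt (σ : Equiv.Perm (Fin 6)) (hfpf : ∀ i, σ i ≠ i) :
    (Finset.univ.filter (fun i => ¬ i < σ i))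
      = Finset.univ.filter (fun i => σ i < i) := by
  apply Finset.filter_congr
  intro i _
  simp only [not_lt]
  constructor
  · intro h; exact lt_of_le_of_ne h (hfpf i)
  · intro h; exact le_of_lt h

lemma card_R (σ : Equiv.Perm (Fin 6)) (hinv : ∀ i, σ (σ i) = i) (hfpf : ∀ i, σ i ≠ i) :
    (Finset.univ.filter (fun i => i < σ i)).card = 3 := by
  have h1 : (Finset.univ.filter (fun i => i < σ i)).card
      = (Finset.univ.filter (fun i => σ i < i)).card := by
    rw [← image_lt σ hinv, Finset.card_image_of_injective _ σ.injective]
  have h2 := Finset.card_filter_add_card_filter_not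
    (s := (Finset.univ : Finset (Fin 6))) (p := fun i => i < σ i)
  rw [filter_not_lt σ hfpf] at h2
  simp only [Finset.card_univ, Fintype.card_fin] at h2
  omega

lemma pair_sum (σ : Equiv.Perm (Fin 6)) (hinv : ∀ i, σ (σ i) = i) (hfpf : ∀ i, σ i ≠ i)
    (f : Fin 6 → ℕ) :
    ∑ i ∈ Finset.univ.filter (fun i => i < σ i), (f i + f (σ i)) = ∑ i, f i := by
  rw [Finset.sum_add_distrib]
  have h : ∑ i ∈ Finset.univ.filter (fun i => i < σ i), f (σ i)
      = ∑ i ∈ Finset.univ.filter (fun i => σ i < i), f i := by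
    rw [← image_lt σ hinv, Finset.sum_image (fun a _ b _ h => σ.injective h)]
  rw [h, ← filter_not_lt σ hfpf, Finset.sum_filter_add_sum_filter_not]

/-- There is no semi-magic square of order 6 together with fixed-point-free involutions
`σ` and `τ` of `Fin 6` such that `S (σ i) (τ j) = 37 - S i j` for all `i, j`. -/
theorem no_semimagic_with_fpf_involutions :
    ¬ ∃ (S : Fin 6 → Fin 6 → ℕ) (σ τ : Equiv.Perm (Fin 6)),
      IsSemiMagicSquare6 S ∧
      (∀ i, σ (σ i) = i) ∧ (∀ i, σ i ≠ i) ∧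
      (∀ j, τ (τ j) = j) ∧ (∀ j, τ j ≠ j) ∧
      (∀ i j, S (σ i) (τ j) = 37 - S i j) := by
  rintro ⟨S, σ, τ, ⟨hinj, hrange, hrow, hcol⟩, hσinv, hσfpf, hτinv, hτfpf, hrel⟩
  set R := Finset.univ.filter (fun i => i < σ i) with hR
  set C := Finset.univ.filter (fun j => j < τ j) with hC
  -- bounds
  have hbound : ∀ i j, 1 ≤ S i j ∧ S i j ≤ 36 := by
    intro i j
    have hmem : S i j ∈ Set.range (fun p : Fin 6 × Fin 6 => S p.1 p.2) := ⟨(i, j), rfl⟩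
    rw [hrange, Set.mem_Icc] at hmem
    exact hmem
  -- key pairing: S (σ i) j + S i (τ j) = 37
  have e2 : ∀ i j, S (σ i) j + S i (τ j) = 37 := by
    intro i j
    have h := hrel i (τ j)
    rw [hτinv] at h
    have := (hbound i (τ j)).2
    omega
  -- claim 1 : for each column j, ∑_{i∈R} S i j = ∑_{i∈R} S i (τ j)
  have claim1 : ∀ j, ∑ i ∈ R, S i j = ∑ i ∈ R, S i (τ j) := by
    intro j
    have e1 : ∑ i ∈ R, (S i j + S (σ i) j) = 111 := by
      rw [pair_sum σ hσinv hσfpf (fun i => S i j), hcol j]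
    have e3 : ∑ i ∈ R, (S (σ i) j + S i (τ j)) = 111 := by
      rw [Finset.sum_congr rfl (fun i _ => e2 i j), Finset.sum_const,
        card_R σ hσinv hσfpf, smul_eq_mul]
    have e4 : ∑ i ∈ R, (S i j + S (σ i) j) + ∑ i ∈ R, S i (τ j)
        = ∑ i ∈ R, S i j + ∑ i ∈ R, (S (σ i) j + S i (τ j)) := by
      rw [← Finset.sum_add_distrib, ← Finset.sum_add_distrib]
      exact Finset.sum_congr rfl (fun i _ => by ring)
    rw [e1, e3] at e4
    omega
  -- claim 2 : for each row i, ∑_{j∈C} (S i j + S i (τ j)) = 111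
  have claim2 : ∀ i, ∑ j ∈ C, (S i j + S i (τ j)) = 111 := by
    intro i
    rw [pair_sum τ hτinv hτfpf (fun j => S i j), hrow i]
  -- combine
  have big : ∑ i ∈ R, ∑ j ∈ C, (S i j + S i (τ j)) = 333 := by
    rw [Finset.sum_congr rfl (fun i _ => claim2 i), Finset.sum_const,
      card_R σ hσinv hσfpf, smul_eq_mul]
  have split : ∑ i ∈ R, ∑ j ∈ C, (S i j + S i (τ j))
      = (∑ i ∈ R, ∑ j ∈ C, S i j) + ∑ i ∈ R, ∑ j ∈ C, S i (τ j) := by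
    rw [← Finset.sum_add_distrib]
    exact Finset.sum_congr rfl (fun i _ => Finset.sum_add_distrib)
  have swap : ∑ i ∈ R, ∑ j ∈ C, S i (τ j) = ∑ i ∈ R, ∑ j ∈ C, S i j := by
    rw [Finset.sum_comm]
    rw [Finset.sum_congr rfl (fun j _ => (claim1 j).symm)]
    exact Finset.sum_comm
  rw [split, swap] at big
  omega
end

section
/- The number of semi-normalized self-complement semi-magic squares of order 6 having a self-complement row is divisible by 4. Precisely: the cardinality of the set of semi-magic squares S of order 6 such that (i) S 0 0 = 1, the first row S 0 0 < S 0 1 < … < S 0 5 is strictly increasing and the first column S 0 0 < S 1 0 < … < S 5 0 is strictly increasing, (ii) there exist permutations σ, τ of Fin 6 with S (σ i) (τ j) = 37 − S i j for all i, j, and (iii) there exists a row r whose set of entries {S r k : k ∈ Fin 6} is closed under x ↦ 37 − x, is divisible by 4. -/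
open Finset
open scoped symmDiff

namespace SCAux

abbrev Sq := Fin 6 → Fin 6 → ℕ

def Compl (S : Sq) : Prop := ∃ σ τ : Equiv.Perm (Fin 6), ∀ i j, S (σ i) (τ j) = 37 - S i j

def Good (S : Sq) : Prop :=
  IsSemiMagicSquare6 S ∧
  S 0 0 = 1 ∧
  (S 0 0 < S 0 1 ∧ S 0 1 < S 0 2 ∧ S 0 2 < S 0 3 ∧ S 0 3 < S 0 4 ∧ S 0 4 < S 0 5) ∧
  (S 0 0 < S 1 0 ∧ S 1 0 < S 2 0 ∧ S 2 0 < S 3 0 ∧ S 3 0 < S 4 0 ∧ S 4 0 < S 5 0) ∧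
  Compl S ∧
  (∃ r : Fin 6, ∀ x ∈ Set.range (S r), 37 - x ∈ Set.range (S r))

open scoped Classical in
noncomputable def sg (S : Sq) : Equiv.Perm (Fin 6) := if h : Compl S then h.choose else 1

open scoped Classical in
noncomputable def tu (S : Sq) : Equiv.Perm (Fin 6) :=
  if h : Compl S then h.choose_spec.choose else 1

lemma sgtu_spec {S : Sq} (h : Compl S) : ∀ i j, S (sg S i) (tu S j) = 37 - S i j := by
  classical
  rw [sg, tu]
  simp only [dif_pos h]
  exact h.choose_spec.choose_spec

lemma inj2 {S : Sq} (hI : Function.Injective fun p : Fin 6 × Fin 6 => S p.1 p.2)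
    {i j i' j' : Fin 6} (h : S i j = S i' j') : i = i' ∧ j = j' := by
  have := hI (a₁ := (i, j)) (a₂ := (i', j')) h
  exact ⟨congrArg Prod.fst this, congrArg Prod.snd this⟩

lemma cmpl_unique {S : Sq} (hI : Function.Injective fun p : Fin 6 × Fin 6 => S p.1 p.2)
    {σ τ : Equiv.Perm (Fin 6)} (h : ∀ i j, S (σ i) (τ j) = 37 - S i j) :
    sg S = σ ∧ tu S = τ := by
  have hc : Compl S := ⟨σ, τ, h⟩
  have hs := sgtu_spec hc
  exact ⟨Equiv.ext fun i => (inj2 hI ((hs i 0).trans (h i 0).symm)).1,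
    Equiv.ext fun j => (inj2 hI ((hs 0 j).trans (h 0 j).symm)).2⟩


section Facts

variable {S : Sq}

lemma good_inj (hG : Good S) : Function.Injective fun p : Fin 6 × Fin 6 => S p.1 p.2 := hG.1.1

lemma good_bounds (hG : Good S) : ∀ i j, 1 ≤ S i j ∧ S i j ≤ 36 := by
  intro i j
  have : S i j ∈ Set.range fun p : Fin 6 × Fin 6 => S p.1 p.2 := ⟨(i, j), rfl⟩
  rw [hG.1.2.1] at this
  exact this

lemma gspec (hG : Good S) : ∀ i j, S (sg S i) (tu S j) = 37 - S i j := sgtu_spec hG.2.2.2.2.1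

lemma tusq (hG : Good S) : ∀ j, tu S (tu S j) = j := by
  intro j
  have h1 := gspec hG (sg S 0) (tu S j)
  have h2 := gspec hG 0 j
  have hb := good_bounds hG 0 j
  have : S (sg S (sg S 0)) (tu S (tu S j)) = S 0 j := by omega
  exact (inj2 (good_inj hG) this).2

lemma sgsq (hG : Good S) : ∀ i, sg S (sg S i) = i := by
  intro i
  have h1 := gspec hG (sg S i) (tu S 0)
  have h2 := gspec hG i 0
  have hb := good_bounds hG i 0
  have : S (sg S (sg S i)) (tu S (tu S 0)) = S i 0 := by omega
  exact (inj2 (good_inj hG) this).1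

/-- rows fixed by `sg`. -/
noncomputable def FR (S : Sq) : Finset (Fin 6) := univ.filter fun r => sg S r = r

lemma FR_nonempty (hG : Good S) : (FR S).Nonempty := by
  obtain ⟨r, hr⟩ := hG.2.2.2.2.2
  have h0 : 37 - S r 0 ∈ Set.range (S r) := hr _ ⟨0, rfl⟩
  obtain ⟨k, hk⟩ := h0
  have : S (sg S r) (tu S 0) = S r k := by rw [gspec hG, hk]
  exact ⟨r, mem_filter.mpr ⟨mem_univ r, (inj2 (good_inj hG) this).1⟩⟩

lemma tu_ne (hG : Good S) : ∀ c, tu S c ≠ c := by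
  intro c hc
  obtain ⟨r, hr⟩ := FR_nonempty hG
  have hfix : sg S r = r := (mem_filter.mp hr).2
  have := gspec hG r c
  rw [hfix, hc] at this
  have hb := good_bounds hG r c
  omega

set_option maxRecDepth 10000 in
lemma two_fixed : ∀ σ : Equiv.Perm (Fin 6), (∀ i, σ (σ i) = i) → ∀ r, σ r = r →
    ∃ r', r' ≠ r ∧ σ r' = r' := by decide

noncomputable def rr1 (S : Sq) : Fin 6 :=
  if h : (FR S).Nonempty then (FR S).min' h else 0

noncomputable def rr2 (S : Sq) : Fin 6 :=
  if h : ((FR S).erase (rr1 S)).Nonempty then ((FR S).erase (rr1 S)).min' h else 0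

lemma rr1_mem (hG : Good S) : rr1 S ∈ FR S := by
  rw [rr1, dif_pos (FR_nonempty hG)]
  exact Finset.min'_mem _ _

lemma erase_nonempty (hG : Good S) : ((FR S).erase (rr1 S)).Nonempty := by
  have h1 := rr1_mem hG
  obtain ⟨r', hne, hfix⟩ := two_fixed (sg S) (sgsq hG) (rr1 S) (mem_filter.mp h1).2
  exact ⟨r', mem_erase.mpr ⟨hne, mem_filter.mpr ⟨mem_univ _, hfix⟩⟩⟩

lemma rr2_mem_erase (hG : Good S) : rr2 S ∈ (FR S).erase (rr1 S) := by
  rw [rr2, dif_pos (erase_nonempty hG)]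
  exact Finset.min'_mem _ _

lemma rr2_mem (hG : Good S) : rr2 S ∈ FR S := mem_of_mem_erase (rr2_mem_erase hG)

lemma rr_ne (hG : Good S) : rr2 S ≠ rr1 S := (mem_erase.mp (rr2_mem_erase hG)).1

lemma sg_rr1 (hG : Good S) : sg S (rr1 S) = rr1 S := (mem_filter.mp (rr1_mem hG)).2

lemma sg_rr2 (hG : Good S) : sg S (rr2 S) = rr2 S := (mem_filter.mp (rr2_mem hG)).2

/-- candidate columns for the first moving pair -/
noncomputable def Aset (S : Sq) : Finset (Fin 6) := univ.filter fun c => c ≠ 0 ∧ c ≠ tu S 0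

noncomputable def ca (S : Sq) : Fin 6 :=
  if h : (Aset S).Nonempty then (Aset S).min' h else 0

noncomputable def Bset (S : Sq) : Finset (Fin 6) :=
  (Aset S).filter fun c => c ≠ ca S ∧ c ≠ tu S (ca S)

noncomputable def cb (S : Sq) : Fin 6 :=
  if h : (Bset S).Nonempty then (Bset S).min' h else 0

noncomputable def CP1 (S : Sq) : Finset (Fin 6) := {ca S, tu S (ca S)}
noncomputable def CP2 (S : Sq) : Finset (Fin 6) := {cb S, tu S (cb S)}

lemma Aset_nonempty : (Aset S).Nonempty := by
  by_cases h : tu S 0 = 1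
  · exact ⟨2, mem_filter.mpr ⟨mem_univ _, by decide, by rw [h]; decide⟩⟩
  · exact ⟨1, mem_filter.mpr ⟨mem_univ _, by decide, fun hc => h hc.symm⟩⟩

lemma ca_mem : ca S ∈ Aset S := by
  rw [ca, dif_pos (Aset_nonempty (S := S))]
  exact Finset.min'_mem _ _

lemma ca_ne0 : ca S ≠ 0 := (mem_filter.mp (ca_mem (S := S))).2.1
lemma ca_ne_tu0 : ca S ≠ tu S 0 := (mem_filter.mp (ca_mem (S := S))).2.2

lemma tu_inj_ne {x y : Fin 6} (h : x ≠ y) : tu S x ≠ tu S y := fun hc => h ((tu S).injective hc)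

lemma tuca_ne0 (hG : Good S) : tu S (ca S) ≠ 0 := by
  intro hc
  have h2 := tusq hG (ca S)
  rw [hc] at h2
  exact ca_ne_tu0 (S := S) h2.symm

lemma tuca_ne_tu0 : tu S (ca S) ≠ tu S 0 := tu_inj_ne (ca_ne0 (S := S))

lemma Bset_nonempty : (Bset S).Nonempty := by
  have hsub : univ \ ({0, tu S 0, ca S, tu S (ca S)} : Finset (Fin 6)) ⊆ Bset S := by
    intro c hc
    rw [mem_sdiff] at hc
    simp only [mem_insert, mem_singleton, not_or] at hc
    exact mem_filter.mpr ⟨mem_filter.mpr ⟨mem_univ _, hc.2.1, hc.2.2.1⟩, hc.2.2.2.1, hc.2.2.2.2⟩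
  have hcard : ({0, tu S 0, ca S, tu S (ca S)} : Finset (Fin 6)).card ≤ 4 := by
    apply le_trans (card_insert_le _ _)
    have h1 := card_insert_le (tu S 0) ({ca S, tu S (ca S)} : Finset (Fin 6))
    have h2 := card_insert_le (ca S) ({tu S (ca S)} : Finset (Fin 6))
    simp only [card_singleton] at *
    omega
  have : (univ \ ({0, tu S 0, ca S, tu S (ca S)} : Finset (Fin 6))).Nonempty := by
    rw [← card_pos, card_sdiff_of_subset (subset_univ _)]
    have h6 : (univ : Finset (Fin 6)).card = 6 := by decide
    omega
  exact this.mono hsub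

lemma cb_mem : cb S ∈ Bset S := by
  rw [cb, dif_pos (Bset_nonempty (S := S))]
  exact Finset.min'_mem _ _

lemma cb_ne0 : cb S ≠ 0 := (mem_filter.mp (mem_filter.mp (cb_mem (S := S))).1).2.1
lemma cb_ne_tu0 : cb S ≠ tu S 0 := (mem_filter.mp (mem_filter.mp (cb_mem (S := S))).1).2.2
lemma cb_ne_ca : cb S ≠ ca S := (mem_filter.mp (cb_mem (S := S))).2.1
lemma cb_ne_tuca : cb S ≠ tu S (ca S) := (mem_filter.mp (cb_mem (S := S))).2.2

end Facts


section Facts2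

variable {S : Sq}

lemma tucb_ne0 (hG : Good S) : tu S (cb S) ≠ 0 := by
  intro hc
  have h2 := tusq hG (cb S)
  rw [hc] at h2
  exact cb_ne_tu0 (S := S) h2.symm

lemma tucb_ne_ca (hG : Good S) : tu S (cb S) ≠ ca S := by
  intro hc
  have h2 := tusq hG (cb S)
  rw [hc] at h2
  exact cb_ne_tuca (S := S) h2.symm

noncomputable def KK (S : Sq) : Finset (Finset (Fin 6)) := {∅, CP1 S, CP2 S, CP1 S ∆ CP2 S}

lemma univ_eq (hG : Good S) :
    ({0, tu S 0, ca S, tu S (ca S), cb S, tu S (cb S)} : Finset (Fin 6)) = univ := by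
  have d01 : tu S 0 ≠ 0 := tu_ne hG 0
  have d02 : ca S ≠ 0 := ca_ne0
  have d03 : tu S (ca S) ≠ 0 := tuca_ne0 hG
  have d04 : cb S ≠ 0 := cb_ne0
  have d05 : tu S (cb S) ≠ 0 := tucb_ne0 hG
  have d12 : ca S ≠ tu S 0 := ca_ne_tu0
  have d13 : tu S (ca S) ≠ tu S 0 := tuca_ne_tu0
  have d14 : cb S ≠ tu S 0 := cb_ne_tu0
  have d15 : tu S (cb S) ≠ tu S 0 := tu_inj_ne cb_ne0
  have d23 : tu S (ca S) ≠ ca S := tu_ne hG _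
  have d24 : cb S ≠ ca S := cb_ne_ca
  have d25 : tu S (cb S) ≠ ca S := tucb_ne_ca hG
  have d34 : cb S ≠ tu S (ca S) := cb_ne_tuca
  have d35 : tu S (cb S) ≠ tu S (ca S) := tu_inj_ne cb_ne_ca
  have d45 : tu S (cb S) ≠ cb S := tu_ne hG _
  apply Finset.eq_univ_of_card
  rw [show Fintype.card (Fin 6) = 6 from by decide]
  rw [card_insert_of_notMem (by
    simp only [mem_insert, mem_singleton, not_or]
    exact ⟨d01.symm, d02.symm, d03.symm, d04.symm, d05.symm⟩)]
  rw [card_insert_of_notMem (by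
    simp only [mem_insert, mem_singleton, not_or]
    exact ⟨d12.symm, d13.symm, d14.symm, d15.symm⟩)]
  rw [card_insert_of_notMem (by
    simp only [mem_insert, mem_singleton, not_or]
    exact ⟨d23.symm, d24.symm, d25.symm⟩)]
  rw [card_insert_of_notMem (by
    simp only [mem_insert, mem_singleton, not_or]
    exact ⟨d34.symm, d35.symm⟩)]
  rw [card_insert_of_notMem (by simp only [mem_singleton]; exact d45.symm)]
  rfl

lemma cover (hG : Good S) : ∀ c, c ≠ 0 → c ≠ tu S 0 →
    ({c, tu S c} : Finset (Fin 6)) = CP1 S ∨ ({c, tu S c} : Finset (Fin 6)) = CP2 S := by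
  intro c hc0 hct0
  have hmem : c ∈ ({0, tu S 0, ca S, tu S (ca S), cb S, tu S (cb S)} : Finset (Fin 6)) := by
    rw [univ_eq hG]; exact mem_univ c
  simp only [mem_insert, mem_singleton] at hmem
  rcases hmem with h | h | h | h | h | h
  · exact absurd h hc0
  · exact absurd h hct0
  · left; rw [h]; rfl
  · left; rw [h, tusq hG, CP1, pair_comm]
  · right; rw [h]; rfl
  · right; rw [h, tusq hG, CP2, pair_comm]

lemma pair_tauInv (hG : Good S) (c : Fin 6) :
    ∀ j, j ∈ ({c, tu S c} : Finset (Fin 6)) ↔ tu S j ∈ ({c, tu S c} : Finset (Fin 6)) := by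
  intro j
  simp only [mem_insert, mem_singleton]
  constructor
  · rintro (rfl | rfl)
    · right; rfl
    · left; exact tusq hG c
  · rintro (h | h)
    · right; rw [← h, tusq hG]
    · left; exact (tu S).injective h

lemma KK_props (hG : Good S) : ∀ C ∈ KK S,
    (∀ j, (j ∈ C ↔ tu S j ∈ C)) ∧ (0 : Fin 6) ∉ C ∧ tu S 0 ∉ C := by
  have h1 : (∀ j, (j ∈ CP1 S ↔ tu S j ∈ CP1 S)) ∧ (0 : Fin 6) ∉ CP1 S ∧ tu S 0 ∉ CP1 S := by
    refine ⟨pair_tauInv hG _, ?_, ?_⟩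
    · simp only [CP1, mem_insert, mem_singleton, not_or]
      exact ⟨fun h => ca_ne0 (S := S) h.symm, fun h => tuca_ne0 hG h.symm⟩
    · simp only [CP1, mem_insert, mem_singleton, not_or]
      exact ⟨fun h => ca_ne_tu0 (S := S) h.symm, fun h => tuca_ne_tu0 (S := S) h.symm⟩
  have h2 : (∀ j, (j ∈ CP2 S ↔ tu S j ∈ CP2 S)) ∧ (0 : Fin 6) ∉ CP2 S ∧ tu S 0 ∉ CP2 S := by
    refine ⟨pair_tauInv hG _, ?_, ?_⟩
    · simp only [CP2, mem_insert, mem_singleton, not_or]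
      exact ⟨fun h => cb_ne0 (S := S) h.symm, fun h => tucb_ne0 hG h.symm⟩
    · simp only [CP2, mem_insert, mem_singleton, not_or]
      exact ⟨fun h => cb_ne_tu0 (S := S) h.symm, fun h => tu_inj_ne (cb_ne0 (S := S)) h.symm⟩
  intro C hC
  simp only [KK, mem_insert, mem_singleton] at hC
  rcases hC with rfl | rfl | rfl | rfl
  · simp
  · exact h1
  · exact h2
  · refine ⟨fun j => ?_, ?_, ?_⟩
    · rw [mem_symmDiff, mem_symmDiff]
      constructor
      · rintro (⟨ha, hb⟩ | ⟨ha, hb⟩)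
        · exact Or.inl ⟨(h1.1 j).mp ha, fun hc => hb ((h2.1 j).mpr hc)⟩
        · exact Or.inr ⟨(h2.1 j).mp ha, fun hc => hb ((h1.1 j).mpr hc)⟩
      · rintro (⟨ha, hb⟩ | ⟨ha, hb⟩)
        · exact Or.inl ⟨(h1.1 j).mpr ha, fun hc => hb ((h2.1 j).mp hc)⟩
        · exact Or.inr ⟨(h2.1 j).mpr ha, fun hc => hb ((h1.1 j).mp hc)⟩
    · rw [mem_symmDiff]
      rintro (⟨ha, _⟩ | ⟨ha, _⟩)
      · exact h1.2.1 ha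
      · exact h2.2.1 ha
    · rw [mem_symmDiff]
      rintro (⟨ha, _⟩ | ⟨ha, _⟩)
      · exact h1.2.2 ha
      · exact h2.2.2 ha

end Facts2


noncomputable def mv (S : Sq) (C : Finset (Fin 6)) : Sq :=
  fun i j => if j ∈ C then S (Equiv.swap (rr1 S) (rr2 S) i) j else S i j

noncomputable def nrm (Q : Sq) : Sq := fun i j => Q i (Tuple.sort (Q 0) j)

section MoveFacts

variable {S : Sq} {C : Finset (Fin 6)}

lemma mv_empty : mv S ∅ = S := by
  funext i j; simp [mv]

lemma mv_col0 (hC0 : (0 : Fin 6) ∉ C) : ∀ i, mv S C i 0 = S i 0 := by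
  intro i; simp [mv, hC0]

lemma mv_inj (hG : Good S) : Function.Injective fun p : Fin 6 × Fin 6 => mv S C p.1 p.2 := by
  rintro ⟨i, j⟩ ⟨i', j'⟩ h
  simp only [mv] at h
  by_cases hj : j ∈ C <;> by_cases hj' : j' ∈ C <;>
    simp only [if_pos, if_neg, hj, hj', ite_true, ite_false] at h
  · obtain ⟨h1, h2⟩ := inj2 (good_inj hG) h
    have := (Equiv.swap (rr1 S) (rr2 S)).injective h1
    simp [this, h2]
  · exact absurd ((inj2 (good_inj hG) h).2 ▸ hj) hj'
  · exact absurd ((inj2 (good_inj hG) h).2.symm ▸ hj') hj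
  · obtain ⟨h1, h2⟩ := inj2 (good_inj hG) h
    simp [h1, h2]

lemma mv_range (hG : Good S) :
    (Set.range fun p : Fin 6 × Fin 6 => mv S C p.1 p.2) = Set.Icc 1 36 := by
  rw [← hG.1.2.1]
  ext y
  constructor
  · rintro ⟨⟨i, j⟩, rfl⟩
    simp only [mv]
    by_cases hj : j ∈ C
    · exact ⟨(Equiv.swap (rr1 S) (rr2 S) i, j), by simp [hj]⟩
    · exact ⟨(i, j), by simp [hj]⟩
  · rintro ⟨⟨i, j⟩, rfl⟩
    by_cases hj : j ∈ C
    · refine ⟨(Equiv.swap (rr1 S) (rr2 S) i, j), ?_⟩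
      simp [mv, hj, Equiv.swap_apply_self]
    · exact ⟨(i, j), by simp [mv, hj]⟩

lemma mv_bounds (hG : Good S) : ∀ i j, 1 ≤ mv S C i j ∧ mv S C i j ≤ 36 := by
  intro i j
  simp only [mv]
  split <;> exact good_bounds hG _ _

lemma row_pair_sum (hG : Good S) (hCt : ∀ j, j ∈ C ↔ tu S j ∈ C)
    {r : Fin 6} (hr : sg S r = r) : 2 * ∑ j ∈ C, S r j = 37 * C.card := by
  have h1 : ∑ j ∈ C, S r (tu S j) = ∑ j ∈ C, S r j :=
    Finset.sum_equiv (tu S) (fun j => hCt j) (fun j _ => rfl)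
  have h2 : ∀ j ∈ C, S r j + S r (tu S j) = 37 := by
    intro j _
    have := gspec hG r j
    rw [hr] at this
    have hb := good_bounds hG r j
    omega
  calc 2 * ∑ j ∈ C, S r j = ∑ j ∈ C, S r j + ∑ j ∈ C, S r (tu S j) := by rw [h1]; ring
    _ = ∑ j ∈ C, (S r j + S r (tu S j)) := by rw [Finset.sum_add_distrib]
    _ = ∑ _j ∈ C, 37 := Finset.sum_congr rfl h2
    _ = 37 * C.card := by rw [Finset.sum_const, smul_eq_mul]; ring

lemma mv_rowsum (hG : Good S) (hCt : ∀ j, j ∈ C ↔ tu S j ∈ C) :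
    ∀ i, ∑ j, mv S C i j = 111 := by
  intro i
  have hCsum : ∑ j ∈ C, S (rr1 S) j = ∑ j ∈ C, S (rr2 S) j := by
    have k1 := row_pair_sum hG hCt (sg_rr1 hG)
    have k2 := row_pair_sum hG hCt (sg_rr2 hG)
    omega
  by_cases h1 : i = rr1 S
  · subst h1
    simp only [mv, Equiv.swap_apply_left]
    rw [Finset.sum_ite, Finset.filter_univ_mem]
    rw [← hCsum]
    have := Finset.sum_filter_add_sum_filter_not (univ : Finset (Fin 6)) (· ∈ C) (S (rr1 S))
    rw [Finset.filter_univ_mem] at this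
    rw [this]
    exact hG.1.2.2.1 _
  · by_cases h2 : i = rr2 S
    · subst h2
      simp only [mv, Equiv.swap_apply_right]
      rw [Finset.sum_ite, Finset.filter_univ_mem]
      rw [hCsum]
      have := Finset.sum_filter_add_sum_filter_not (univ : Finset (Fin 6)) (· ∈ C) (S (rr2 S))
      rw [Finset.filter_univ_mem] at this
      rw [this]
      exact hG.1.2.2.1 _
    · have hsw : Equiv.swap (rr1 S) (rr2 S) i = i := Equiv.swap_apply_of_ne_of_ne h1 h2
      have : ∀ j, mv S C i j = S i j := by
        intro j; simp [mv, hsw]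
      rw [Finset.sum_congr rfl fun j _ => this j]
      exact hG.1.2.2.1 _

lemma mv_colsum (hG : Good S) : ∀ j, ∑ i, mv S C i j = 111 := by
  intro j
  by_cases hj : j ∈ C
  · simp only [mv, if_pos hj]
    rw [Equiv.sum_comp (Equiv.swap (rr1 S) (rr2 S)) (fun i => S i j)]
    exact hG.1.2.2.2 _
  · simp only [mv, if_neg hj]
    exact hG.1.2.2.2 _

lemma swap_sg_comm (hG : Good S) :
    ∀ i, Equiv.swap (rr1 S) (rr2 S) (sg S i) = sg S (Equiv.swap (rr1 S) (rr2 S) i) := by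
  intro i
  by_cases h1 : i = rr1 S
  · subst h1; rw [sg_rr1 hG, Equiv.swap_apply_left, sg_rr2 hG]
  · by_cases h2 : i = rr2 S
    · subst h2; rw [sg_rr2 hG, Equiv.swap_apply_right, sg_rr1 hG]
    · have hs1 : sg S i ≠ rr1 S := fun hc => h1 (by rw [← sgsq hG i, hc, sg_rr1 hG])
      have hs2 : sg S i ≠ rr2 S := fun hc => h2 (by rw [← sgsq hG i, hc, sg_rr2 hG])
      rw [Equiv.swap_apply_of_ne_of_ne hs1 hs2, Equiv.swap_apply_of_ne_of_ne h1 h2]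

lemma mv_compl (hG : Good S) (hCt : ∀ j, j ∈ C ↔ tu S j ∈ C) :
    ∀ i j, mv S C (sg S i) (tu S j) = 37 - mv S C i j := by
  intro i j
  by_cases hj : j ∈ C
  · have hτj : tu S j ∈ C := (hCt j).mp hj
    simp only [mv, if_pos hj, if_pos hτj]
    rw [swap_sg_comm hG]
    exact gspec hG _ _
  · have hτj : tu S j ∉ C := fun h => hj ((hCt j).mpr h)
    simp only [mv, if_neg hj, if_neg hτj]
    exact gspec hG _ _

lemma mv_scrow (hG : Good S) (hCt : ∀ j, j ∈ C ↔ tu S j ∈ C) :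
    ∀ x ∈ Set.range (mv S C (rr1 S)), 37 - x ∈ Set.range (mv S C (rr1 S)) := by
  rintro x ⟨j, rfl⟩
  refine ⟨tu S j, ?_⟩
  by_cases hj : j ∈ C
  · have hτj : tu S j ∈ C := (hCt j).mp hj
    simp only [mv, if_pos hj, if_pos hτj, Equiv.swap_apply_left]
    have := gspec hG (rr2 S) j
    rw [sg_rr2 hG] at this
    exact this
  · have hτj : tu S j ∉ C := fun h => hj ((hCt j).mpr h)
    simp only [mv, if_neg hj, if_neg hτj]
    have := gspec hG (rr1 S) j
    rw [sg_rr1 hG] at this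
    exact this

end MoveFacts

section NrmFacts

lemma nrm_eq_self {Q : Sq} (h : Monotone (Q 0)) : nrm Q = Q := by
  have hs := Tuple.sort_eq_refl_iff_monotone.mpr h
  funext i j
  rw [nrm, hs]
  rfl

lemma nrm_relabel {Q : Sq} (h0 : Function.Injective (Q 0)) (π : Equiv.Perm (Fin 6)) :
    nrm (fun i j => Q i (π j)) = nrm Q := by
  funext i j
  have key := congrFun (Tuple.comp_perm_comp_sort_eq_comp_sort (σ := π) (f := Q 0)) j
  exact congrArg (Q i) (h0 key)

lemma sort_zero {Q : Sq} (h0 : Function.Injective (Q 0)) (h00 : Q 0 0 = 1)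
    (hb : ∀ j, 1 ≤ Q 0 j) : Tuple.sort (Q 0) 0 = 0 := by
  have hmono := Tuple.monotone_sort (Q 0)
  have h1 : Q 0 (Tuple.sort (Q 0) 0) ≤ Q 0 (Tuple.sort (Q 0) ((Tuple.sort (Q 0)).symm 0)) :=
    hmono (Fin.zero_le _)
  rw [Equiv.apply_symm_apply] at h1
  rw [h00] at h1
  have h2 := hb (Tuple.sort (Q 0) 0)
  have : Q 0 (Tuple.sort (Q 0) 0) = Q 0 0 := by omega
  exact h0 this

end NrmFacts


section GoodT

variable {S : Sq} {C : Finset (Fin 6)}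

lemma mv_row0_inj (hG : Good S) : Function.Injective (mv S C 0) :=
  fun x y h => ((inj2 (mv_inj hG) h).2 : x = y)

lemma mv_00 (hC0 : (0 : Fin 6) ∉ C) (hG : Good S) : mv S C 0 0 = 1 := by
  rw [mv_col0 hC0]
  exact hG.2.1

lemma mv_sort_zero (hG : Good S) (hC0 : (0 : Fin 6) ∉ C) :
    Tuple.sort (mv S C 0) 0 = 0 :=
  sort_zero (mv_row0_inj hG) (mv_00 hC0 hG) (fun j => (mv_bounds hG 0 j).1)

lemma nrm_mv_col0 (hG : Good S) (hC0 : (0 : Fin 6) ∉ C) :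
    ∀ i, nrm (mv S C) i 0 = S i 0 := by
  intro i
  rw [nrm, mv_sort_zero hG hC0, mv_col0 hC0]

lemma nrm_mv_inj (hG : Good S) :
    Function.Injective fun p : Fin 6 × Fin 6 => nrm (mv S C) p.1 p.2 := by
  rintro ⟨i, j⟩ ⟨i', j'⟩ h
  obtain ⟨h1, h2⟩ := inj2 (mv_inj hG) (h : mv S C i _ = mv S C i' _)
  have h3 := (Tuple.sort (mv S C 0)).injective h2
  exact Prod.ext_iff.mpr ⟨h1, h3⟩

lemma nrm_mv_strictMono (hG : Good S) : StrictMono (nrm (mv S C) 0) := by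
  have hmono : Monotone (nrm (mv S C) 0) := Tuple.monotone_sort (mv S C 0)
  exact hmono.strictMono_of_injective
    ((mv_row0_inj hG).comp (Tuple.sort (mv S C 0)).injective)

theorem goodT (hG : Good S) (hCt : ∀ j, j ∈ C ↔ tu S j ∈ C) (hC0 : (0 : Fin 6) ∉ C) :
    Good (nrm (mv S C)) := by
  set π := Tuple.sort (mv S C 0) with hπ
  have hT : ∀ i j, nrm (mv S C) i j = mv S C i (π j) := fun i j => rfl
  refine ⟨⟨?_, ?_, ?_, ?_⟩, ?_, ?_, ?_, ?_, ?_⟩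
  · exact nrm_mv_inj hG
  · rw [← mv_range (C := C) hG]
    ext y
    constructor
    · rintro ⟨⟨i, j⟩, rfl⟩
      exact ⟨(i, π j), rfl⟩
    · rintro ⟨⟨i, j⟩, rfl⟩
      exact ⟨(i, π.symm j), by simp only [hT]; rw [Equiv.apply_symm_apply]⟩
  · intro i
    rw [show ∑ j, nrm (mv S C) i j = ∑ j, mv S C i (π j) from rfl,
      Equiv.sum_comp π (mv S C i)]
    exact mv_rowsum hG hCt i
  · intro j
    exact mv_colsum hG (π j)
  · rw [hT, mv_sort_zero hG hC0, mv_00 hC0 hG]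
  · have h := nrm_mv_strictMono (C := C) hG
    exact ⟨h (by decide), h (by decide), h (by decide), h (by decide), h (by decide)⟩
  · have h := nrm_mv_col0 (C := C) hG hC0
    rw [h, h, h, h, h, h]
    exact hG.2.2.2.1
  · refine ⟨sg S, (π.trans (tu S)).trans π.symm, fun i j => ?_⟩
    simp only [hT, Equiv.trans_apply]
    rw [Equiv.apply_symm_apply]
    exact mv_compl hG hCt i (π j)
  · refine ⟨rr1 S, ?_⟩
    rintro x ⟨j, rfl⟩
    obtain ⟨k, hk⟩ := mv_scrow hG hCt _ ⟨π j, rfl⟩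
    exact ⟨π.symm k, by simp only [hT]; rw [Equiv.apply_symm_apply]; exact hk⟩

end GoodT


section Transfer

variable {S : Sq} {C : Finset (Fin 6)}

lemma sg_mv (hG : Good S) (hCt : ∀ j, j ∈ C ↔ tu S j ∈ C) :
    sg (mv S C) = sg S ∧ tu (mv S C) = tu S :=
  cmpl_unique (mv_inj hG) (mv_compl hG hCt)

lemma rr_mv (hG : Good S) (hCt : ∀ j, j ∈ C ↔ tu S j ∈ C) :
    rr1 (mv S C) = rr1 S ∧ rr2 (mv S C) = rr2 S := by
  have hFR : FR (mv S C) = FR S := by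
    simp only [FR, (sg_mv hG hCt).1]
  have h1 : rr1 (mv S C) = rr1 S := by simp only [rr1, hFR]
  refine ⟨h1, ?_⟩
  simp only [rr2, hFR, h1]

lemma nrm_mv_witness (hG : Good S) (hCt : ∀ j, j ∈ C ↔ tu S j ∈ C) :
    ∀ i j, nrm (mv S C) (sg S i)
      (((Tuple.sort (mv S C 0)).trans (tu S)).trans (Tuple.sort (mv S C 0)).symm j)
        = 37 - nrm (mv S C) i j := by
  intro i j
  show mv S C (sg S i) (Tuple.sort (mv S C 0) ((Tuple.sort (mv S C 0)).symm
    (tu S (Tuple.sort (mv S C 0) j)))) = 37 - mv S C i (Tuple.sort (mv S C 0) j)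
  rw [Equiv.apply_symm_apply]
  exact mv_compl hG hCt i _

lemma sg_T (hG : Good S) (hCt : ∀ j, j ∈ C ↔ tu S j ∈ C) :
    sg (nrm (mv S C)) = sg S :=
  (cmpl_unique (nrm_mv_inj hG) (nrm_mv_witness hG hCt)).1

lemma tu_T (hG : Good S) (hCt : ∀ j, j ∈ C ↔ tu S j ∈ C) :
    tu (nrm (mv S C)) = ((Tuple.sort (mv S C 0)).trans (tu S)).trans (Tuple.sort (mv S C 0)).symm :=
  (cmpl_unique (nrm_mv_inj hG) (nrm_mv_witness hG hCt)).2

lemma tu_T_apply (hG : Good S) (hCt : ∀ j, j ∈ C ↔ tu S j ∈ C) (x : Fin 6) :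
    Tuple.sort (mv S C 0) (tu (nrm (mv S C)) x) = tu S (Tuple.sort (mv S C 0) x) := by
  rw [tu_T hG hCt]
  simp only [Equiv.trans_apply]
  rw [Equiv.apply_symm_apply]

lemma rr_T (hG : Good S) (hCt : ∀ j, j ∈ C ↔ tu S j ∈ C) :
    rr1 (nrm (mv S C)) = rr1 S ∧ rr2 (nrm (mv S C)) = rr2 S := by
  have hFR : FR (nrm (mv S C)) = FR S := by
    simp only [FR, sg_T hG hCt]
  have h1 : rr1 (nrm (mv S C)) = rr1 S := by simp only [rr1, hFR]
  refine ⟨h1, ?_⟩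
  simp only [rr2, hFR, h1]

lemma mv_T_eq (hG : Good S) (hCt : ∀ j, j ∈ C ↔ tu S j ∈ C) (D : Finset (Fin 6)) :
    mv (nrm (mv S C)) D =
      fun i j => mv (mv S C) (D.image (Tuple.sort (mv S C 0))) i (Tuple.sort (mv S C 0) j) := by
  funext i j
  have hrrT := rr_T hG hCt
  have hrrM := rr_mv hG hCt
  simp only [mv, hrrT.1, hrrT.2, hrrM.1, hrrM.2]
  have hmem : Tuple.sort (mv S C 0) j ∈ D.image (Tuple.sort (mv S C 0)) ↔ j ∈ D :=
    Function.Injective.mem_finset_image (Tuple.sort (mv S C 0)).injective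
  by_cases hj : j ∈ D
  · rw [if_pos hj, if_pos (hmem.mpr hj)]
    rfl
  · rw [if_neg hj, if_neg (fun h => hj (hmem.mp h))]
    rfl

lemma mv_mv (hG : Good S) (hCt : ∀ j, j ∈ C ↔ tu S j ∈ C) (E : Finset (Fin 6)) :
    mv (mv S C) E = mv S (C ∆ E) := by
  funext i j
  have hrrM := rr_mv hG hCt
  simp only [mv, hrrM.1, hrrM.2]
  by_cases hE : j ∈ E <;> by_cases hC : j ∈ C <;>
    simp [hE, hC, mem_symmDiff, Equiv.swap_apply_self]

lemma nrm_mv_T (hG : Good S) (hCt : ∀ j, j ∈ C ↔ tu S j ∈ C) (D : Finset (Fin 6)) :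
    nrm (mv (nrm (mv S C)) D) = nrm (mv S (C ∆ D.image (Tuple.sort (mv S C 0)))) := by
  rw [mv_T_eq hG hCt D, mv_mv hG hCt]
  exact nrm_relabel (mv_row0_inj hG) _

end Transfer


section Klein

variable {S : Sq}

lemma KK_symmDiff (hG : Good S) {x y : Finset (Fin 6)} (hx : x ∈ KK S) (hy : y ∈ KK S) :
    x ∆ y ∈ KK S := by
  simp only [KK, mem_insert, mem_singleton] at hx hy ⊢
  rcases hx with rfl | rfl | rfl | rfl <;> rcases hy with rfl | rfl | rfl | rfl
  · left; rw [symmDiff_self]; rfl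
  · right; left; rw [← Finset.bot_eq_empty, bot_symmDiff]
  · right; right; left; rw [← Finset.bot_eq_empty, bot_symmDiff]
  · right; right; right; rw [← Finset.bot_eq_empty, bot_symmDiff]
  · right; left; rw [← Finset.bot_eq_empty, symmDiff_bot]
  · left; rw [symmDiff_self]; rfl
  · right; right; right; rfl
  · right; right; left; exact symmDiff_symmDiff_cancel_left _ _
  · right; right; left; rw [← Finset.bot_eq_empty, symmDiff_bot]
  · right; right; right; rw [symmDiff_comm]
  · left; rw [symmDiff_self]; rfl
  · right; left; rw [symmDiff_comm, symmDiff_symmDiff_cancel_right]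
  · right; right; right; rw [← Finset.bot_eq_empty, symmDiff_bot]
  · right; right; left; rw [symmDiff_comm, symmDiff_symmDiff_cancel_left]
  · right; left; exact symmDiff_symmDiff_cancel_right _ _
  · left; rw [symmDiff_self]; rfl

lemma empty_mem_KK : ∅ ∈ KK S := by simp [KK]
lemma CP1_mem_KK : CP1 S ∈ KK S := by simp [KK]
lemma CP2_mem_KK : CP2 S ∈ KK S := by simp [KK]
lemma symm_mem_KK : CP1 S ∆ CP2 S ∈ KK S := by simp [KK]

lemma CP1_ne_empty : CP1 S ≠ ∅ := by simp [CP1]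
lemma CP2_ne_empty : CP2 S ≠ ∅ := by simp [CP2]

lemma CP1_ne_CP2 (hG : Good S) : CP1 S ≠ CP2 S := by
  intro h
  have : ca S ∈ CP2 S := h ▸ (mem_insert_self _ _)
  simp only [CP2, mem_insert, mem_singleton] at this
  rcases this with h' | h'
  · exact cb_ne_ca (S := S) h'.symm
  · exact tucb_ne_ca hG h'.symm

lemma symm_ne_empty (hG : Good S) : CP1 S ∆ CP2 S ≠ ∅ := by
  intro h
  have : CP1 S ∆ CP2 S = ⊥ := h
  rw [symmDiff_eq_bot] at this
  exact CP1_ne_CP2 hG this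

lemma CP1_ne_symm (hG : Good S) : CP1 S ≠ CP1 S ∆ CP2 S := by
  intro h
  have h2 : CP1 S ∆ CP1 S = CP1 S ∆ (CP1 S ∆ CP2 S) := by rw [← h]
  rw [symmDiff_self, symmDiff_symmDiff_cancel_left] at h2
  exact CP2_ne_empty (S := S) h2.symm

lemma CP2_ne_symm (hG : Good S) : CP2 S ≠ CP1 S ∆ CP2 S := by
  intro h
  have h2 : CP2 S ∆ CP2 S = (CP1 S ∆ CP2 S) ∆ CP2 S := by rw [← h]
  rw [symmDiff_self, symmDiff_symmDiff_cancel_right] at h2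
  exact CP1_ne_empty (S := S) h2.symm

end Klein

section Classes

variable {S : Sq}

noncomputable def cls (S : Sq) : Finset Sq := (KK S).image fun C => nrm (mv S C)

lemma good_mono0 (hG : Good S) : Monotone (S 0) := by
  obtain ⟨h1, h2, h3, h4, h5⟩ := hG.2.2.1
  intro x y hxy
  fin_cases x <;> fin_cases y <;> simp_all <;> omega

lemma nrm_mv_empty (hG : Good S) : nrm (mv S ∅) = S := by
  rw [mv_empty]
  exact nrm_eq_self (good_mono0 hG)

lemma mem_cls_self (hG : Good S) : S ∈ cls S := by
  rw [cls]
  exact mem_image.mpr ⟨∅, empty_mem_KK, nrm_mv_empty hG⟩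

lemma exists_other_row (hG : Good S) : ∃ i : Fin 6, i ≠ rr1 S ∧ i ≠ rr2 S := by
  have : (univ \ ({rr1 S, rr2 S} : Finset (Fin 6))).Nonempty := by
    rw [← card_pos, card_sdiff_of_subset (subset_univ _)]
    have h1 : ({rr1 S, rr2 S} : Finset (Fin 6)).card ≤ 2 := by
      apply le_trans (card_insert_le _ _); simp
    have h2 : (univ : Finset (Fin 6)).card = 6 := by decide
    omega
  obtain ⟨i, hi⟩ := this
  rw [mem_sdiff] at hi
  simp only [mem_insert, mem_singleton, not_or] at hi
  exact ⟨i, hi.2.1, hi.2.2⟩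

lemma classes_inj (hG : Good S) {C C' : Finset (Fin 6)}
    (h : nrm (mv S C) = nrm (mv S C')) : C = C' := by
  obtain ⟨i₀, hi1, hi2⟩ := exists_other_row hG
  have hsw : Equiv.swap (rr1 S) (rr2 S) i₀ = i₀ := Equiv.swap_apply_of_ne_of_ne hi1 hi2
  set π := Tuple.sort (mv S C 0) with hπ
  set π' := Tuple.sort (mv S C' 0) with hπ'
  have hpt : ∀ i j, mv S C i (π j) = mv S C' i (π' j) := by
    intro i j
    exact congrFun (congrFun h i) j
  have hππ' : ∀ j, π j = π' j := by
    intro j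
    have := hpt i₀ j
    simp only [mv, hsw] at this
    have h2 : S i₀ (π j) = S i₀ (π' j) := by
      rcases em (π j ∈ C) with hc | hc <;> rcases em (π' j ∈ C') with hc' | hc' <;>
        simp_all
    exact (inj2 (good_inj hG) h2).2
  have hmv : ∀ i j, mv S C i j = mv S C' i j := by
    intro i j
    have hthis := hpt i (π.symm j)
    have hj : π' (π.symm j) = j := by
      rw [← hππ' (π.symm j)]
      exact Equiv.apply_symm_apply π j
    rw [hππ' (π.symm j), hj] at hthis
    exact hthis
  by_contra hne
  have hsd : (C ∆ C').Nonempty := by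
    rw [Finset.nonempty_iff_ne_empty]
    intro he
    rw [← Finset.bot_eq_empty] at he
    exact hne (symmDiff_eq_bot.mp he)
  obtain ⟨j₀, hj₀⟩ := hsd
  rw [mem_symmDiff] at hj₀
  have hkey := hmv (rr1 S) j₀
  rcases hj₀ with ⟨hin, hout⟩ | ⟨hin, hout⟩
  · simp only [mv, if_pos hin, if_neg hout, Equiv.swap_apply_left] at hkey
    exact rr_ne hG (inj2 (good_inj hG) hkey).1
  · simp only [mv, if_pos hin, if_neg hout, Equiv.swap_apply_left] at hkey
    exact rr_ne hG (inj2 (good_inj hG) hkey).1.symm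

end Classes


section Main

variable {S : Sq}

lemma cls_good (hG : Good S) : ∀ T ∈ cls S, Good T := by
  intro T hT
  obtain ⟨C, hC, rfl⟩ := mem_image.mp hT
  obtain ⟨hCt, hC0, _⟩ := KK_props hG C hC
  exact goodT hG hCt hC0

lemma cls_card (hG : Good S) : (cls S).card = 4 := by
  have hinj : ∀ {C C' : Finset (Fin 6)}, nrm (mv S C) = nrm (mv S C') → C = C' :=
    fun h => classes_inj hG h
  rw [cls, KK, image_insert, image_insert, image_insert, image_singleton]
  rw [card_insert_of_notMem (by
    simp only [mem_insert, mem_singleton, not_or]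
    refine ⟨fun h => CP1_ne_empty (S := S) (hinj h).symm,
      fun h => CP2_ne_empty (S := S) (hinj h).symm,
      fun h => symm_ne_empty hG (hinj h).symm⟩)]
  rw [card_insert_of_notMem (by
    simp only [mem_insert, mem_singleton, not_or]
    exact ⟨fun h => CP1_ne_CP2 hG (hinj h), fun h => CP1_ne_symm hG (hinj h)⟩)]
  rw [card_insert_of_notMem (by
    simp only [mem_singleton]
    exact fun h => CP2_ne_symm hG (hinj h))]
  rfl

theorem cls_eq (hG : Good S) {C : Finset (Fin 6)} (hC : C ∈ KK S) :
    cls (nrm (mv S C)) = cls S := by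
  obtain ⟨hCt, hC0, hCt0⟩ := KK_props hG C hC
  have hGT : Good (nrm (mv S C)) := goodT hG hCt hC0
  set T := nrm (mv S C) with hT
  set π := Tuple.sort (mv S C 0) with hπ
  have hπ0 : π 0 = 0 := mv_sort_zero hG hC0
  have htu : ∀ x, π (tu T x) = tu S (π x) := tu_T_apply hG hCt
  have himg1 : (CP1 T).image π = {π (ca T), tu S (π (ca T))} := by
    rw [CP1, image_insert, image_singleton, htu]
  have himg2 : (CP2 T).image π = {π (cb T), tu S (π (cb T))} := by
    rw [CP2, image_insert, image_singleton, htu]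
  have hca0 : π (ca T) ≠ 0 := fun h => ca_ne0 (S := T) (π.injective (h.trans hπ0.symm))
  have hcat0 : π (ca T) ≠ tu S 0 := by
    intro h
    have h0 : π (tu T 0) = tu S 0 := by rw [htu 0, hπ0]
    exact ca_ne_tu0 (S := T) (π.injective (h.trans h0.symm))
  have hcb0 : π (cb T) ≠ 0 := fun h => cb_ne0 (S := T) (π.injective (h.trans hπ0.symm))
  have hcbt0 : π (cb T) ≠ tu S 0 := by
    intro h
    have h0 : π (tu T 0) = tu S 0 := by rw [htu 0, hπ0]
    exact cb_ne_tu0 (S := T) (π.injective (h.trans h0.symm))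
  have hcov1 : (CP1 T).image π = CP1 S ∨ (CP1 T).image π = CP2 S := by
    rw [himg1]; exact cover hG _ hca0 hcat0
  have hcov2 : (CP2 T).image π = CP1 S ∨ (CP2 T).image π = CP2 S := by
    rw [himg2]; exact cover hG _ hcb0 hcbt0
  have hne : (CP1 T).image π ≠ (CP2 T).image π := by
    intro h
    have hmem : π (cb T) ∈ (CP2 T).image π :=
      mem_image_of_mem _ (mem_insert_self _ _)
    rw [← h, himg1] at hmem
    simp only [mem_insert, mem_singleton] at hmem
    rcases hmem with h' | h'
    · exact cb_ne_ca (S := T) (π.injective h')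
    · rw [← htu] at h'
      exact cb_ne_tuca (S := T) (π.injective h')
  have hmatch : ((CP1 T).image π = CP1 S ∧ (CP2 T).image π = CP2 S) ∨
      ((CP1 T).image π = CP2 S ∧ (CP2 T).image π = CP1 S) := by
    rcases hcov1 with h1 | h1 <;> rcases hcov2 with h2 | h2
    · exact absurd (h1.trans h2.symm) hne
    · exact Or.inl ⟨h1, h2⟩
    · exact Or.inr ⟨h1, h2⟩
    · exact absurd (h1.trans h2.symm) hne
  have himgD : (CP1 T ∆ CP2 T).image π = CP1 S ∆ CP2 S := by
    rw [Finset.image_symmDiff _ _ π.injective]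
    rcases hmatch with ⟨h1, h2⟩ | ⟨h1, h2⟩
    · rw [h1, h2]
    · rw [h1, h2, symmDiff_comm]
  apply Finset.ext
  intro x
  simp only [cls, mem_image]
  constructor
  · rintro ⟨D, hD, rfl⟩
    have key := nrm_mv_T hG hCt D
    have hDK : D.image π ∈ KK S := by
      simp only [KK, mem_insert, mem_singleton] at hD
      rcases hD with rfl | rfl | rfl | rfl
      · rw [image_empty]; exact empty_mem_KK
      · rcases hmatch with ⟨h1, _⟩ | ⟨h1, _⟩
        · rw [h1]; exact CP1_mem_KK
        · rw [h1]; exact CP2_mem_KK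
      · rcases hmatch with ⟨_, h2⟩ | ⟨_, h2⟩
        · rw [h2]; exact CP2_mem_KK
        · rw [h2]; exact CP1_mem_KK
      · rw [himgD]; exact symm_mem_KK
    exact ⟨C ∆ D.image π, KK_symmDiff hG hC hDK, key.symm⟩
  · rintro ⟨E, hE, rfl⟩
    have hEK : C ∆ E ∈ KK S := KK_symmDiff hG hC hE
    have hsurj : ∀ E', E' ∈ KK S → ∃ D ∈ KK T, D.image π = E' := by
      intro E' hE'
      simp only [KK, mem_insert, mem_singleton] at hE'
      rcases hE' with rfl | rfl | rfl | rfl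
      · exact ⟨∅, empty_mem_KK, image_empty _⟩
      · rcases hmatch with ⟨h1, _⟩ | ⟨_, h2⟩
        · exact ⟨CP1 T, CP1_mem_KK, h1⟩
        · exact ⟨CP2 T, CP2_mem_KK, h2⟩
      · rcases hmatch with ⟨_, h2⟩ | ⟨h1, _⟩
        · exact ⟨CP2 T, CP2_mem_KK, h2⟩
        · exact ⟨CP1 T, CP1_mem_KK, h1⟩
      · exact ⟨CP1 T ∆ CP2 T, symm_mem_KK, himgD⟩
    obtain ⟨D, hDT, hDimg⟩ := hsurj (C ∆ E) hEK
    refine ⟨D, hDT, ?_⟩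
    rw [nrm_mv_T hG hCt D, hDimg, symmDiff_symmDiff_cancel_left]

end Main


end SCAux

/-- The number of semi-normalized self-complement semi-magic squares of order 6
having a self-complement row is divisible by 4. -/
theorem card_semi_normalized_self_complement_dvd_four :
    4 ∣ Set.ncard {S : Fin 6 → Fin 6 → ℕ | IsSemiMagicSquare6 S ∧
      S 0 0 = 1 ∧
      (S 0 0 < S 0 1 ∧ S 0 1 < S 0 2 ∧ S 0 2 < S 0 3 ∧ S 0 3 < S 0 4 ∧ S 0 4 < S 0 5) ∧
      (S 0 0 < S 1 0 ∧ S 1 0 < S 2 0 ∧ S 2 0 < S 3 0 ∧ S 3 0 < S 4 0 ∧ S 4 0 < S 5 0) ∧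
      (∃ σ τ : Equiv.Perm (Fin 6), ∀ i j, S (σ i) (τ j) = 37 - S i j) ∧
      (∃ r : Fin 6, ∀ x ∈ Set.range (S r), 37 - x ∈ Set.range (S r))} := by
  classical
  have hsets : {S : Fin 6 → Fin 6 → ℕ | IsSemiMagicSquare6 S ∧
      S 0 0 = 1 ∧
      (S 0 0 < S 0 1 ∧ S 0 1 < S 0 2 ∧ S 0 2 < S 0 3 ∧ S 0 3 < S 0 4 ∧ S 0 4 < S 0 5) ∧
      (S 0 0 < S 1 0 ∧ S 1 0 < S 2 0 ∧ S 2 0 < S 3 0 ∧ S 3 0 < S 4 0 ∧ S 4 0 < S 5 0) ∧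
      (∃ σ τ : Equiv.Perm (Fin 6), ∀ i j, S (σ i) (τ j) = 37 - S i j) ∧
      (∃ r : Fin 6, ∀ x ∈ Set.range (S r), 37 - x ∈ Set.range (S r))}
      = {S : SCAux.Sq | SCAux.Good S} := rfl
  rw [hsets]
  have hfin : {S : SCAux.Sq | SCAux.Good S}.Finite := by
    apply Set.Finite.subset
      (Set.Finite.pi' (fun _ : Fin 6 => Set.Finite.pi' (fun _ : Fin 6 => Set.finite_Icc 1 36)))
    intro S hS
    exact fun i => fun j => Set.mem_Icc.mpr (SCAux.good_bounds hS i j)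
  rw [Set.ncard_eq_toFinset_card _ hfin]
  have hmemXF : ∀ T, T ∈ hfin.toFinset ↔ SCAux.Good T := fun T => Set.Finite.mem_toFinset hfin
  rw [Finset.card_eq_sum_card_fiberwise (f := SCAux.cls)
    (t := hfin.toFinset.image SCAux.cls) (fun x hx => Finset.mem_image_of_mem _ hx)]
  apply Finset.dvd_sum
  intro t ht
  obtain ⟨S₀, hS₀, rfl⟩ := Finset.mem_image.mp ht
  have hG₀ : SCAux.Good S₀ := (hmemXF S₀).mp hS₀
  have hfib : hfin.toFinset.filter (fun T => SCAux.cls T = SCAux.cls S₀) = SCAux.cls S₀ := by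
    ext T
    rw [Finset.mem_filter]
    constructor
    · rintro ⟨hTX, hclsT⟩
      rw [← hclsT]
      exact SCAux.mem_cls_self ((hmemXF T).mp hTX)
    · intro hT
      have hGT : SCAux.Good T := SCAux.cls_good hG₀ T hT
      obtain ⟨C, hC, rfl⟩ := Finset.mem_image.mp hT
      exact ⟨(hmemXF _).mpr hGT, SCAux.cls_eq hG₀ hC⟩
  rw [hfib, SCAux.cls_card hG₀]
end
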